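/- arXiv:2305.11093 — 4 statements merged into one kernel-verified Lean document; each statement's English description precedes it below -/
import Mathlib

section
/- Let ρ be an s-qubit density operator and G an (a+s)-qubit unitary with G|0⟩^{⊗(a+s)} = |ρ⟩ a purification of ρ (Tr_a |ρ⟩⟨ρ| = ρ). Then U = (G† ⊗ I_{2^s})(I_{2^a} ⊗ SWAP_s)(G ⊗ I_{2^s}) satisfies (⟨0|^{⊗(a+s)} ⊗ I_{2^s}) U (|0⟩^{⊗(a+s)} ⊗ I_{2^s}) = ρ, i.e., U is an exact block encoding of ρ. -/
open Matrix Kronecker BigOperators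

/-- The unitary `I_{2^a} ⊗ SWAP_s` on the `(a+s+s)`-qubit register, written with
the association `((A × S) × S)` of the three registers. -/
noncomputable def idTensorSwap (a s : ℕ) :
    Matrix ((Fin (2 ^ a) × Fin (2 ^ s)) × Fin (2 ^ s))
      ((Fin (2 ^ a) × Fin (2 ^ s)) × Fin (2 ^ s)) ℂ :=
  Matrix.of fun p q =>
    if p.1.1 = q.1.1 ∧ p.1.2 = q.2 ∧ p.2 = q.1.2 then (1 : ℂ) else 0

/-- Lemma (block encoding of a density operator via purification): if `G` is an
`(a+s)`-qubit unitary such that `G|0⟩⊗|0⟩` is a purification of the `s`-qubit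
density operator `ρ` (i.e. `ρ b b' = Σ_x (G|0,0⟩)(x,b) conj((G|0,0⟩)(x,b'))`),
then `U = (G† ⊗ I_{2^s}) (I_{2^a} ⊗ SWAP_s) (G ⊗ I_{2^s})` is an exact block
encoding of `ρ`: projecting the first `a+s` qubits onto `|0⟩` yields `ρ`. -/
theorem block_encoding_of_density_via_purification
    (a s : ℕ)
    (G : Matrix (Fin (2 ^ a) × Fin (2 ^ s)) (Fin (2 ^ a) × Fin (2 ^ s)) ℂ)
    (hG : G ∈ Matrix.unitaryGroup (Fin (2 ^ a) × Fin (2 ^ s)) ℂ)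
    (ρ : Matrix (Fin (2 ^ s)) (Fin (2 ^ s)) ℂ)
    (hpur : ∀ b b' : Fin (2 ^ s),
      ρ b b' = ∑ x : Fin (2 ^ a),
        G (x, b) ((0 : Fin (2 ^ a)), (0 : Fin (2 ^ s))) *
          star (G (x, b') ((0 : Fin (2 ^ a)), (0 : Fin (2 ^ s))))) :
    ∀ b b' : Fin (2 ^ s),
      ((G ⊗ₖ (1 : Matrix (Fin (2 ^ s)) (Fin (2 ^ s)) ℂ))ᴴ * idTensorSwap a s *
        (G ⊗ₖ (1 : Matrix (Fin (2 ^ s)) (Fin (2 ^ s)) ℂ)))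
        ((((0 : Fin (2 ^ a)), (0 : Fin (2 ^ s))), b))
        ((((0 : Fin (2 ^ a)), (0 : Fin (2 ^ s))), b')) = ρ b b' := by
  intro b b'
  rw [hpur]
  simp only [Matrix.mul_apply, Matrix.conjTranspose_apply, Matrix.kroneckerMap_apply,
    idTensorSwap, Matrix.of_apply, Matrix.one_apply, Fintype.sum_prod_type,
    mul_ite, ite_mul, mul_one, mul_zero, zero_mul, one_mul,
    Finset.sum_ite_eq, Finset.sum_ite_eq', Finset.mem_univ, if_true, star_one, star_zero,
    apply_ite (star : ℂ → ℂ)]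
  congr 1
  ext x
  simp [ite_and, mul_comm]
end

section
/- Let N be a CPTP map on n-qubit states with isometric extension V_N (ancilla in |0⟩^{⊗n}), and let U be an n-qubit unitary with U|0⟩^{⊗n} = |ψ⟩. Define U_Fid = (I ⊗ U†) · [block encoding of N(|ψ⟩⟨ψ|) constructed from V_N and U via Lemma on purifications] · (I ⊗ U). Then ⟨0^{3n}| U_Fid |0^{3n}⟩ = ⟨ψ| N(|ψ⟩⟨ψ|) |ψ⟩, so the probability of measuring all zeros equals F⁴ where F² = ⟨ψ|N(|ψ⟩⟨ψ|)|ψ⟩. -/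
open Matrix Kronecker BigOperators

/-- The unitary `I_{2^n} ⊗ SWAP_n` on three `n`-qubit registers, with the
association `((A × S) × S)`. -/
noncomputable def idTensorSwapN (n : ℕ) :
    Matrix ((Fin (2 ^ n) × Fin (2 ^ n)) × Fin (2 ^ n))
      ((Fin (2 ^ n) × Fin (2 ^ n)) × Fin (2 ^ n)) ℂ :=
  Matrix.of fun p q =>
    if p.1.1 = q.1.1 ∧ p.1.2 = q.2 ∧ p.2 = q.1.2 then (1 : ℂ) else 0

/-- Fidelity-estimation circuit.  Let `N` be a CPTP map on `n`-qubit states with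
isometric extension `V` (a unitary on ancilla ⊗ system, ancilla starting in
`|0⟩`), and let `U` be an `n`-qubit unitary preparing `|ψ⟩ = U|0⟩`.  The state
`Nψ = N(|ψ⟩⟨ψ|)` is then given by tracing the ancilla out of
`V(|0⟩ ⊗ U|0⟩)`.  With `G = V (I ⊗ U)` the purification unitary and
`BE = (G† ⊗ I)(I ⊗ SWAP)(G ⊗ I)` its block encoding,
`U_Fid = (I ⊗ U†) · BE · (I ⊗ U)` satisfies
`⟨0^{3n}| U_Fid |0^{3n}⟩ = ⟨ψ| N(|ψ⟩⟨ψ|) |ψ⟩ = F²`, so the probability of the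
all-zero outcome is `F⁴`. -/
theorem fidelity_estimation_circuit
    (n : ℕ)
    (V : Matrix (Fin (2 ^ n) × Fin (2 ^ n)) (Fin (2 ^ n) × Fin (2 ^ n)) ℂ)
    (hV : V ∈ Matrix.unitaryGroup (Fin (2 ^ n) × Fin (2 ^ n)) ℂ)
    (U : Matrix (Fin (2 ^ n)) (Fin (2 ^ n)) ℂ)
    (hU : U ∈ Matrix.unitaryGroup (Fin (2 ^ n)) ℂ)
    (Nψ : Matrix (Fin (2 ^ n)) (Fin (2 ^ n)) ℂ)
    (hN : ∀ b b' : Fin (2 ^ n), Nψ b b' =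
      ∑ x : Fin (2 ^ n),
        (∑ s', V (x, b) ((0 : Fin (2 ^ n)), s') * U s' (0 : Fin (2 ^ n))) *
          star (∑ s', V (x, b') ((0 : Fin (2 ^ n)), s') * U s' (0 : Fin (2 ^ n)))) :
    (((1 : Matrix (Fin (2 ^ n) × Fin (2 ^ n)) (Fin (2 ^ n) × Fin (2 ^ n)) ℂ) ⊗ₖ Uᴴ) *
      (((V * ((1 : Matrix (Fin (2 ^ n)) (Fin (2 ^ n)) ℂ) ⊗ₖ U)) ⊗ₖ
          (1 : Matrix (Fin (2 ^ n)) (Fin (2 ^ n)) ℂ))ᴴ *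
        idTensorSwapN n *
        ((V * ((1 : Matrix (Fin (2 ^ n)) (Fin (2 ^ n)) ℂ) ⊗ₖ U)) ⊗ₖ
          (1 : Matrix (Fin (2 ^ n)) (Fin (2 ^ n)) ℂ))) *
      ((1 : Matrix (Fin (2 ^ n) × Fin (2 ^ n)) (Fin (2 ^ n) × Fin (2 ^ n)) ℂ) ⊗ₖ U))
      (((0 : Fin (2 ^ n)), (0 : Fin (2 ^ n))), (0 : Fin (2 ^ n)))
      (((0 : Fin (2 ^ n)), (0 : Fin (2 ^ n))), (0 : Fin (2 ^ n)))
    = ∑ b : Fin (2 ^ n), ∑ b' : Fin (2 ^ n),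
        star (U b (0 : Fin (2 ^ n))) * Nψ b b' * U b' (0 : Fin (2 ^ n)) := by
  set G := V * ((1 : Matrix (Fin (2 ^ n)) (Fin (2 ^ n)) ℂ) ⊗ₖ U) with hGdef
  have hGe : ∀ x b : Fin (2 ^ n), G (x, b) ((0 : Fin (2 ^ n)), (0 : Fin (2 ^ n)))
      = ∑ s', V (x, b) ((0 : Fin (2 ^ n)), s') * U s' (0 : Fin (2 ^ n)) := by
    intro x b
    simp only [hGdef, Matrix.mul_apply, Matrix.kroneckerMap_apply, Matrix.one_apply,
      Fintype.sum_prod_type, mul_ite, ite_mul, mul_zero, zero_mul, one_mul, mul_one,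
      Finset.sum_ite_irrel, Finset.sum_const_zero,
      Finset.sum_ite_eq, Finset.sum_ite_eq', Finset.mem_univ, if_true]
  have hNG : ∀ b b' : Fin (2 ^ n), Nψ b b'
      = ∑ x : Fin (2 ^ n), G (x, b) ((0 : Fin (2 ^ n)), (0 : Fin (2 ^ n)))
          * star (G (x, b') ((0 : Fin (2 ^ n)), (0 : Fin (2 ^ n)))) := by
    intro b b'
    rw [hN b b']
    exact Finset.sum_congr rfl fun x _ => by rw [hGe, hGe]
  have hA : ∀ t t' : Fin (2 ^ n),
      ((G ⊗ₖ (1 : Matrix (Fin (2 ^ n)) (Fin (2 ^ n)) ℂ))ᴴ * idTensorSwapN n *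
        (G ⊗ₖ (1 : Matrix (Fin (2 ^ n)) (Fin (2 ^ n)) ℂ)))
        (((0 : Fin (2 ^ n)), (0 : Fin (2 ^ n))), t)
        (((0 : Fin (2 ^ n)), (0 : Fin (2 ^ n))), t')
      = Nψ t t' := by
    intro t t'
    rw [hNG]
    simp only [Matrix.mul_apply, Matrix.kroneckerMap_apply, Matrix.conjTranspose_apply,
      Matrix.one_apply, idTensorSwapN, Matrix.of_apply, Fintype.sum_prod_type, ite_and,
      mul_ite, ite_mul, mul_zero, zero_mul, mul_one, one_mul,
      Finset.sum_ite_eq, Finset.sum_ite_eq', Finset.mem_univ, if_true]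
    simp only [apply_ite (star : ℂ → ℂ), star_zero, ite_mul, zero_mul,
      Finset.sum_ite_irrel, Finset.sum_const_zero,
      Finset.sum_ite_eq, Finset.sum_ite_eq', Finset.mem_univ, if_true]
    exact Finset.sum_congr rfl fun x _ => mul_comm _ _
  set A := (G ⊗ₖ (1 : Matrix (Fin (2 ^ n)) (Fin (2 ^ n)) ℂ))ᴴ * idTensorSwapN n *
      (G ⊗ₖ (1 : Matrix (Fin (2 ^ n)) (Fin (2 ^ n)) ℂ)) with hAdef
  simp only [Matrix.mul_apply, Matrix.kroneckerMap_apply, Matrix.conjTranspose_apply,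
    Matrix.one_apply, Fintype.sum_prod_type, mul_ite, ite_mul, mul_zero, zero_mul,
    one_mul, mul_one, Finset.sum_ite_irrel, Finset.sum_const_zero, Finset.mul_sum,
    Finset.sum_ite_eq, Finset.sum_ite_eq', Finset.mem_univ, if_true]
  simp only [hA, Finset.sum_mul]
  exact Finset.sum_comm
end

section
/- Let A be an n-qubit square matrix with ‖A‖ ≤ 1 and singular value decomposition A = V₁ Σ V₂†. Then U^Σ = [[Σ, −√(I−Σ²)],[√(I−Σ²), Σ]] is unitary, and U^A = (I₂ ⊗ V₁) U^Σ (I₂ ⊗ V₂†) is an exact block encoding of A: (⟨0| ⊗ I) U^A (|0⟩ ⊗ I) = A. -/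
open Matrix BigOperators

/-- Block encoding via the singular value decomposition.  Let `A` be an
`n`-qubit matrix with `A = V₁ Σ V₂†`, where `Σ` is the diagonal matrix of
singular values `σ i ∈ [0,1]` and `V₁, V₂` are unitary.  Then
`U^Σ = [[Σ, −√(I−Σ²)], [√(I−Σ²), Σ]]` is unitary, and
`U^A = (I₂ ⊗ V₁) U^Σ (I₂ ⊗ V₂†)` is an exact block encoding of `A`: its
top-left block equals `A`. -/
theorem block_encoding_via_svd
    {n : ℕ}
    (A V1 V2 : Matrix (Fin (2 ^ n)) (Fin (2 ^ n)) ℂ)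
    (σ : Fin (2 ^ n) → ℝ)
    (hσ : ∀ i, 0 ≤ σ i ∧ σ i ≤ 1)
    (hV1 : V1 ∈ Matrix.unitaryGroup (Fin (2 ^ n)) ℂ)
    (hV2 : V2 ∈ Matrix.unitaryGroup (Fin (2 ^ n)) ℂ)
    (hA : A = V1 * Matrix.diagonal (fun i => (σ i : ℂ)) * V2ᴴ) :
    (Matrix.fromBlocks
        (Matrix.diagonal fun i => (σ i : ℂ))
        (-(Matrix.diagonal fun i => (Real.sqrt (1 - σ i ^ 2) : ℂ)))
        (Matrix.diagonal fun i => (Real.sqrt (1 - σ i ^ 2) : ℂ))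
        (Matrix.diagonal fun i => (σ i : ℂ))
      ∈ Matrix.unitaryGroup (Fin (2 ^ n) ⊕ Fin (2 ^ n)) ℂ) ∧
    (Matrix.fromBlocks V1 0 0 V1 *
      Matrix.fromBlocks
        (Matrix.diagonal fun i => (σ i : ℂ))
        (-(Matrix.diagonal fun i => (Real.sqrt (1 - σ i ^ 2) : ℂ)))
        (Matrix.diagonal fun i => (Real.sqrt (1 - σ i ^ 2) : ℂ))
        (Matrix.diagonal fun i => (σ i : ℂ)) *
      Matrix.fromBlocks V2ᴴ 0 0 V2ᴴ).toBlocks₁₁ = A := by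
  set D : Matrix (Fin (2 ^ n)) (Fin (2 ^ n)) ℂ :=
    Matrix.diagonal fun i => (σ i : ℂ) with hD
  set S : Matrix (Fin (2 ^ n)) (Fin (2 ^ n)) ℂ :=
    Matrix.diagonal fun i => (Real.sqrt (1 - σ i ^ 2) : ℂ) with hS
  have hDH : Dᴴ = D := by
    simp [hD, diagonal_conjTranspose, Function.comp, Complex.conj_ofReal]
  have hSH : Sᴴ = S := by
    simp [hS, diagonal_conjTranspose, Function.comp, Complex.conj_ofReal]
  have hDS : D * S = S * D := by
    simp [hD, hS, diagonal_mul_diagonal, mul_comm]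
  have hsum : D * D + S * S = 1 := by
    rw [hD, hS, diagonal_mul_diagonal, diagonal_mul_diagonal, Matrix.diagonal_add,
      ← Matrix.diagonal_one]
    refine congrArg Matrix.diagonal (funext fun i => ?_)
    have h1 : Real.sqrt (1 - σ i ^ 2) ^ 2 = 1 - σ i ^ 2 :=
      Real.sq_sqrt (by nlinarith [(hσ i).1, (hσ i).2])
    have h2 : (σ i : ℝ) ^ 2 + Real.sqrt (1 - σ i ^ 2) ^ 2 = 1 := by rw [h1]; ring
    calc (σ i : ℂ) * (σ i : ℂ) + (Real.sqrt (1 - σ i ^ 2) : ℂ) * (Real.sqrt (1 - σ i ^ 2) : ℂ)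
        = ((σ i ^ 2 + Real.sqrt (1 - σ i ^ 2) ^ 2 : ℝ) : ℂ) := by push_cast; ring
      _ = 1 := by rw [h2]; norm_num
  constructor
  · rw [Matrix.mem_unitaryGroup_iff]
    show Matrix.fromBlocks D (-S) S D * star (Matrix.fromBlocks D (-S) S D) = 1
    rw [Matrix.star_eq_conjTranspose, Matrix.fromBlocks_conjTranspose,
      Matrix.fromBlocks_multiply, hDH, hSH, conjTranspose_neg, hSH]
    have h11 : D * D + -S * -S = 1 := by rw [neg_mul_neg]; exact hsum
    have h12 : D * S + -S * D = 0 := by rw [neg_mul, hDS, add_neg_cancel]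
    have h21 : S * D + D * -S = 0 := by rw [mul_neg, hDS, add_neg_cancel]
    have h22 : S * S + D * D = 1 := by rw [add_comm]; exact hsum
    rw [h11, h12, h21, h22, Matrix.fromBlocks_one]
  · rw [Matrix.fromBlocks_multiply, Matrix.fromBlocks_multiply]
    simp [Matrix.toBlocks_fromBlocks₁₁, hA, Matrix.mul_assoc]
end

section
/- For the 4-qubit code with codewords |0⟩_L = (|0000⟩+|1111⟩)/√2 and |1⟩_L = (|0011⟩+|1100⟩)/√2, and single-qubit amplitude-damping noise with Kraus operators A₀ = diag(1, √(1−γ)), A₁ = √γ |0⟩⟨1| acting i.i.d. on each of the 4 qubits, the single-damping-error Kraus operators E_k = A₁^{(k)} ⊗ A₀^{⊗3 (other qubits)} (k = 1,…,4), together with the no-damping operator E₀ = A₀^{⊗4}, satisfy the approximate Knill–Laflamme conditions: P E_j† E_k P = 0 for j ≠ k with j,k ∈ {1,2,3,4}, where P = |0⟩_L⟨0|_L + |1⟩_L⟨1|_L. -/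
open Matrix BigOperators

namespace FourQubitAD

/-- Amplitude-damping Kraus operator `A₀ = [[1, 0], [0, √(1−γ)]]`. -/
noncomputable def A0 (γ : ℝ) : Matrix (Fin 2) (Fin 2) ℂ :=
  !![1, 0; 0, (Real.sqrt (1 - γ) : ℂ)]

/-- Amplitude-damping Kraus operator `A₁ = [[0, √γ], [0, 0]]`. -/
noncomputable def A1 (γ : ℝ) : Matrix (Fin 2) (Fin 2) ℂ :=
  !![0, (Real.sqrt γ : ℂ); 0, 0]

/-- The four-qubit Hilbert space index. -/
abbrev Q4 := Fin 2 × Fin 2 × Fin 2 × Fin 2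

/-- Tensor product of four single-qubit operators. -/
noncomputable def fourFold (f : Fin 4 → Matrix (Fin 2) (Fin 2) ℂ) :
    Matrix Q4 Q4 ℂ :=
  Matrix.of fun x y =>
    f 0 x.1 y.1 * f 1 x.2.1 y.2.1 * f 2 x.2.2.1 y.2.2.1 * f 3 x.2.2.2 y.2.2.2

/-- The single-damping-error Kraus operator `E_k`: `A₁` on qubit `k` and `A₀`
on the remaining three qubits. -/
noncomputable def EK (γ : ℝ) (k : Fin 4) : Matrix Q4 Q4 ℂ :=
  fourFold fun j => if j = k then A1 γ else A0 γ

/-- The logical codeword `|0⟩_L = (|0000⟩ + |1111⟩)/√2`. -/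
noncomputable def v0 : Q4 → ℂ := fun x =>
  if x = ((0 : Fin 2), (0 : Fin 2), (0 : Fin 2), (0 : Fin 2)) ∨
      x = ((1 : Fin 2), (1 : Fin 2), (1 : Fin 2), (1 : Fin 2)) then
    ((Real.sqrt 2 : ℂ))⁻¹ else 0

/-- The logical codeword `|1⟩_L = (|0011⟩ + |1100⟩)/√2`. -/
noncomputable def v1 : Q4 → ℂ := fun x =>
  if x = ((0 : Fin 2), (0 : Fin 2), (1 : Fin 2), (1 : Fin 2)) ∨
      x = ((1 : Fin 2), (1 : Fin 2), (0 : Fin 2), (0 : Fin 2)) then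
    ((Real.sqrt 2 : ℂ))⁻¹ else 0

/-- The projector onto the codespace `span{|0⟩_L, |1⟩_L}`. -/
noncomputable def Pcode : Matrix Q4 Q4 ℂ :=
  Matrix.vecMulVec v0 (star v0) + Matrix.vecMulVec v1 (star v1)

/-- support point of `EK γ j *ᵥ v0` -/
def d0 : Fin 4 → Q4 := ![(0,1,1,1), (1,0,1,1), (1,1,0,1), (1,1,1,0)]
/-- support point of `EK γ j *ᵥ v1` -/
def d1 : Fin 4 → Q4 := ![(0,1,0,0), (1,0,0,0), (0,0,0,1), (0,0,1,0)]

lemma d_ne : ∀ j k : Fin 4, j ≠ k →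
    d0 j ≠ d0 k ∧ d0 j ≠ d1 k ∧ d1 j ≠ d0 k ∧ d1 j ≠ d1 k := by decide

set_option maxHeartbeats 1000000 in
lemma mulVec_v0 (γ : ℝ) (j : Fin 4) (x : Q4) :
    (EK γ j *ᵥ v0) x
      = (EK γ j x ((0:Fin 2),(0:Fin 2),(0:Fin 2),(0:Fin 2))
          + EK γ j x ((1:Fin 2),(1:Fin 2),(1:Fin 2),(1:Fin 2))) * (Real.sqrt 2 : ℂ)⁻¹ := by
  simp [mulVec, dotProduct, v0, Fintype.sum_prod_type, Fin.sum_univ_two, add_mul]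

set_option maxHeartbeats 1000000 in
lemma mulVec_v1 (γ : ℝ) (j : Fin 4) (x : Q4) :
    (EK γ j *ᵥ v1) x
      = (EK γ j x ((0:Fin 2),(0:Fin 2),(1:Fin 2),(1:Fin 2))
          + EK γ j x ((1:Fin 2),(1:Fin 2),(0:Fin 2),(0:Fin 2))) * (Real.sqrt 2 : ℂ)⁻¹ := by
  simp [mulVec, dotProduct, v1, Fintype.sum_prod_type, Fin.sum_univ_two, add_mul]

set_option maxHeartbeats 1000000 in
lemma supp_v0 (γ : ℝ) (j : Fin 4) (x : Q4) (hx : x ≠ d0 j) :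
    (EK γ j *ᵥ v0) x = 0 := by
  rw [mulVec_v0]
  obtain ⟨a, b, c, d⟩ := x
  fin_cases j <;> fin_cases a <;> fin_cases b <;> fin_cases c <;> fin_cases d <;>
    simp_all [EK, fourFold, d0, A0, A1]

set_option maxHeartbeats 1000000 in
lemma supp_v1 (γ : ℝ) (j : Fin 4) (x : Q4) (hx : x ≠ d1 j) :
    (EK γ j *ᵥ v1) x = 0 := by
  rw [mulVec_v1]
  obtain ⟨a, b, c, d⟩ := x
  fin_cases j <;> fin_cases a <;> fin_cases b <;> fin_cases c <;> fin_cases d <;>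
    simp_all [EK, fourFold, d1, A0, A1]

lemma dot_zero {u w : Q4 → ℂ} {p q : Q4} (hpq : p ≠ q)
    (hu : ∀ x, x ≠ p → u x = 0) (hw : ∀ x, x ≠ q → w x = 0) :
    star u ⬝ᵥ w = 0 := by
  apply Finset.sum_eq_zero
  intro x _
  by_cases h : x = p
  · subst h
    rw [hw _ hpq, mul_zero]
  · simp [Pi.star_apply, hu x h]

lemma star_dot_conjmul (u w : Q4 → ℂ) (A B : Matrix Q4 Q4 ℂ) :
    star u ⬝ᵥ ((Aᴴ * B) *ᵥ w) = star (A *ᵥ u) ⬝ᵥ (B *ᵥ w) := by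
  rw [← Matrix.mulVec_mulVec, Matrix.star_mulVec, ← Matrix.dotProduct_mulVec]

lemma vmv_mul_mul_vmv (a b c d : Q4 → ℂ) (M : Matrix Q4 Q4 ℂ) :
    Matrix.vecMulVec a b * M * Matrix.vecMulVec c d = (b ⬝ᵥ (M *ᵥ c)) • Matrix.vecMulVec a d := by
  ext x y
  simp only [Matrix.mul_apply, Matrix.vecMulVec_apply, Matrix.smul_apply,
    Matrix.mulVec, dotProduct, smul_eq_mul, Finset.mul_sum, Finset.sum_mul]
  rw [Finset.sum_comm]
  refine Finset.sum_congr rfl fun z _ => Finset.sum_congr rfl fun w _ => by ring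

/-- For the 4-qubit code of Leung et al. under i.i.d. single-qubit
amplitude-damping noise, distinct single-damping-error spaces are orthogonal:
`P E_j† E_k P = 0` for all `j ≠ k` in `{1, …, 4}` (the approximate
Knill–Laflamme conditions). -/
theorem kl_orthogonality_single_damping_errors
    (γ : ℝ) (hγ0 : 0 ≤ γ) (hγ1 : γ ≤ 1) :
    ∀ j k : Fin 4, j ≠ k → Pcode * (EK γ j)ᴴ * EK γ k * Pcode = 0 := by
  intro j k hjk
  obtain ⟨h00, h01, h10, h11⟩ := d_ne j k hjk
  rw [mul_assoc Pcode]
  unfold Pcode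
  simp only [add_mul, mul_add]
  rw [vmv_mul_mul_vmv, vmv_mul_mul_vmv, vmv_mul_mul_vmv, vmv_mul_mul_vmv,
    star_dot_conjmul, star_dot_conjmul, star_dot_conjmul, star_dot_conjmul,
    dot_zero h00 (supp_v0 γ j) (supp_v0 γ k),
    dot_zero h01 (supp_v0 γ j) (supp_v1 γ k),
    dot_zero h10 (supp_v1 γ j) (supp_v0 γ k),
    dot_zero h11 (supp_v1 γ j) (supp_v1 γ k)]
  simp

end FourQubitAD
end
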